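/- Suppose p = √2−1. For any event determined by the walk exiting the interval (L,U): taking U = x > 0 fixed and letting L → −∞, the limiting upper-exit probability from 0 equals 1, i.e. β(0)|_{L=−∞}^{U=x} = 1; and taking L = −x fixed and letting U → +∞, the limiting upper-exit probability from 0 equals 0, i.e. β(0)|_{L=−x}^{U=+∞} = 0. Equivalently, lim_{L→−∞} β(0) = 1 for fixed U = x, and lim_{U→+∞} β(0) = 0 for fixed L = −x, where β(0) is computed with the given barriers L, U. -/

import Mathlib

open MeasureTheory ProbabilityTheory Filter
open scoped ENNReal Classical

noncomputable section

variable {Ω : Type*} [MeasurableSpace Ω]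

/-- The `k`-th step of the ladder chain `L(2,2,p)` built from the driving
sequence `ξ` (indexed from 1): `X₁ = ±1` according to `ξ₁`, and for `k ≥ 2`,
`X_k = -1` if `ξ_k = -1`, `X_k = 2` if `ξ_k = ξ_{k-1} = 1`, and `X_k = 1`
if `ξ_k = 1, ξ_{k-1} = -1`. -/
def ladderX (ξ : ℕ → Ω → ℤ) (k : ℕ) (ω : Ω) : ℤ :=
  if k = 1 then (if ξ 1 ω = 1 then 1 else -1)
  else if ξ k ω = -1 then -1
  else if ξ (k - 1) ω = 1 then 2 else 1

/-- The ladder chain `S_n = X₁ + ⋯ + X_n` (with `S_0 = 0`). -/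
def ladderS (ξ : ℕ → Ω → ℤ) (n : ℕ) (ω : Ω) : ℤ :=
  ∑ k ∈ Finset.Icc 1 n, ladderX ξ k ω

/-- The truncated exit time `τ_k^x`: the least `l ≤ k` with `S_l^x ≤ L` or
`S_l^x ≥ U`, and `k` if there is no such `l`. -/
def ladderTau (ξ : ℕ → Ω → ℤ) (L U x : ℤ) (k : ℕ) (ω : Ω) : ℕ :=
  if ∃ l ≤ k, (x + ladderS ξ l ω ≤ L ∨ U ≤ x + ladderS ξ l ω)
  then sInf {l | l ≤ k ∧ (x + ladderS ξ l ω ≤ L ∨ U ≤ x + ladderS ξ l ω)}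
  else k

/-- The event `A_k^x`: the walk started at `x` exits through the lower
barrier `L` within the first `k` steps. -/
def ladderA (ξ : ℕ → Ω → ℤ) (L U x : ℤ) (k : ℕ) : Set Ω :=
  ⋃ l ∈ Finset.range (k + 1),
    {ω | ladderTau ξ L U x k ω = l ∧ x + ladderS ξ l ω ≤ L}

/-- The event `B_k^x`: the walk started at `x` exits through the upper
barrier `U` within the first `k` steps. -/
def ladderB (ξ : ℕ → Ω → ℤ) (L U x : ℤ) (k : ℕ) : Set Ω :=
  ⋃ l ∈ Finset.range (k + 1),
    {ω | ladderTau ξ L U x k ω = l ∧ U ≤ x + ladderS ξ l ω}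

/-!
Let `u_n` be the indicator of `ξ_n = 1`. Whatever the past,
`X_{n+1} + p u_{n+1} - p u_n = (u_{n+1} - p) (2 + p + u_n)` precisely because `p² + 2p = 1`;
as `u_{n+1}` is independent of the past with mean `p`, `M = S + p u` is a martingale.
Let `τ` be the exit time from `(L, U)` truncated at `k`. Optional stopping gives `E M_τ = 0`, and
since steps lie in `[-1, 2]`, `L ≤ S_τ ≤ U + 1` and `S_τ ≤ M_τ ≤ S_τ + 1`. Comparing `M_τ` with the
indicators of the upper exit and of no exit by time `k` yields
`(U - L) β_k(0) ≤ -L` and `-1 - L ≤ (U + 1 - L) (β_k(0) + P(no exit by k))`.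
Any `U - L` consecutive up-steps force an exit, so `P(no exit by k)` decays geometrically, and in the
limit `(-1 - L) / (U + 1 - L) ≤ β(0) ≤ -L / (U - L)`, which gives both limits.
-/

open scoped Topology

section Walk

omit [MeasurableSpace Ω]

variable {ξ : ℕ → Ω → ℤ} {L U : ℤ} {k n : ℕ} {ω : Ω}

@[simp]
lemma ladderS_zero : ladderS ξ 0 ω = 0 := by
  simp [ladderS]

lemma ladderS_succ : ladderS ξ (n + 1) ω = ladderS ξ n ω + ladderX ξ (n + 1) ω := by
  rw [ladderS, Finset.sum_Icc_succ_top (by omega), ladderS]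

lemma ladderX_mem_Icc : ladderX ξ k ω ∈ Set.Icc (-1) 2 := by
  unfold ladderX; split_ifs <;> simp

lemma one_le_ladderX (h : ξ k ω = 1) : 1 ≤ ladderX ξ k ω := by
  unfold ladderX; split_ifs <;> simp_all

lemma abs_ladderS_le : |ladderS ξ n ω| ≤ 2 * n := by
  induction n with
  | zero => simp
  | succ n ih =>
    have hX := ladderX_mem_Icc (ξ := ξ) (k := n + 1) (ω := ω)
    rw [Set.mem_Icc] at hX
    rw [abs_le] at ih ⊢
    rw [ladderS_succ]
    push_cast
    constructor <;> linarith [ih.1, ih.2, hX.1, hX.2]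

lemma le_ladderS_add {r : ℕ} (h : ∀ i ∈ Finset.Ioc n (n + r), ξ i ω = 1) :
    ladderS ξ n ω + r ≤ ladderS ξ (n + r) ω := by
  induction r with
  | zero => simp
  | succ r ih =>
    have hX := one_le_ladderX (h (n + r + 1) (Finset.mem_Ioc.2 ⟨by omega, by omega⟩))
    have := ih fun i hi => h i (Finset.Ioc_subset_Ioc_right (by omega) hi)
    rw [← add_assoc, ladderS_succ]
    push_cast
    omega

lemma ladderTau_zero_eq_hittingBtwn :
    ladderTau ξ L U 0 k = hittingBtwn (ladderS ξ) (Set.Ioo L U)ᶜ 0 k := by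
  ext ω
  simp only [ladderTau, hittingBtwn, zero_add, Set.mem_Icc, zero_le, true_and, Set.mem_compl_iff,
    Set.mem_Ioo, not_and_or, not_lt]
  congr 2
  ext l
  simp

lemma mem_ladderB_iff :
    ω ∈ ladderB ξ L U 0 k ↔ U ≤ ladderS ξ (hittingBtwn (ladderS ξ) (Set.Ioo L U)ᶜ 0 k ω) ω := by
  simp only [ladderB, ladderTau_zero_eq_hittingBtwn, Set.mem_iUnion, Set.mem_ofPred_eq,
    Finset.mem_range, zero_add]
  constructor
  · rintro ⟨l, -, rfl, h⟩
    exact h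
  · exact fun h => ⟨_, Nat.lt_succ_of_le (hittingBtwn_le ω), rfl, h⟩

def ladderStay (ξ : ℕ → Ω → ℤ) (L U : ℤ) (k : ℕ) : Set Ω :=
  {ω | ∀ j ≤ k, ladderS ξ j ω ∈ Set.Ioo L U}

lemma ladderStay_anti {k k' : ℕ} (h : k ≤ k') : ladderStay ξ L U k' ⊆ ladderStay ξ L U k :=
  fun _ hω j hj => hω j (hj.trans h)

lemma ladderStay_add_subset (hLU : L ≤ U) :
    ladderStay ξ L U (n + (U - L).toNat) ⊆
      ladderStay ξ L U n \ ⋂ i ∈ Finset.Ioc n (n + (U - L).toNat), {ω | ξ i ω = 1} := by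
  intro ω hω
  refine ⟨ladderStay_anti (Nat.le_add_right _ _) hω, fun hrun => ?_⟩
  have hup := le_ladderS_add (ξ := ξ) (n := n) (r := (U - L).toNat) (ω := ω) (by simpa using hrun)
  have h0 := (hω n (Nat.le_add_right _ _)).1
  have h1 := (hω _ le_rfl).2
  rw [Int.toNat_of_nonneg (by omega)] at hup
  omega

lemma ladderS_hittingBtwn_mem_Icc (hL : L ≤ 0) (hU : 0 ≤ U) :
    ladderS ξ (hittingBtwn (ladderS ξ) (Set.Ioo L U)ᶜ 0 k ω) ω ∈ Set.Icc L (U + 1) := by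
  rcases h : hittingBtwn (ladderS ξ) (Set.Ioo L U)ᶜ 0 k ω with _ | j
  · simp only [ladderS_zero, Set.mem_Icc]
    omega
  · have hj : ladderS ξ j ω ∈ Set.Ioo L U := not_not.1 <|
      notMem_of_lt_hittingBtwn (by rw [h]; exact Nat.lt_succ_self j) (Nat.zero_le j)
    have hX := ladderX_mem_Icc (ξ := ξ) (k := j + 1) (ω := ω)
    rw [ladderS_succ]
    simp only [Set.mem_Ioo, Set.mem_Icc] at hj hX ⊢
    omega

lemma ladderS_hittingBtwn_notMem_Ioo (h : ω ∉ ladderStay ξ L U k) :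
    ladderS ξ (hittingBtwn (ladderS ξ) (Set.Ioo L U)ᶜ 0 k ω) ω ∉ Set.Ioo L U := by
  simp only [ladderStay, Set.mem_ofPred_eq, not_forall] at h
  obtain ⟨j, hjk, hj⟩ := h
  exact hittingBtwn_mem_set (u := ladderS ξ) (s := (Set.Ioo L U)ᶜ) ⟨j, ⟨Nat.zero_le j, hjk⟩, hj⟩

lemma ladderS_hittingBtwn_ge (hL : L ≤ 0) (hU : 0 ≤ U) :
    (L : ℝ) + (U - L) * (ladderB ξ L U 0 k).indicator 1 ω ≤
      ladderS ξ (hittingBtwn (ladderS ξ) (Set.Ioo L U)ᶜ 0 k ω) ω := by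
  by_cases hB : ω ∈ ladderB ξ L U 0 k
  · have : (U : ℝ) ≤ ladderS ξ (hittingBtwn (ladderS ξ) (Set.Ioo L U)ᶜ 0 k ω) ω := by
      exact_mod_cast mem_ladderB_iff.1 hB
    simp only [Set.indicator_of_mem hB, Pi.one_apply]
    linarith
  · simp only [Set.indicator_of_notMem hB, mul_zero, add_zero]
    exact_mod_cast (ladderS_hittingBtwn_mem_Icc (ξ := ξ) (k := k) (ω := ω) hL hU).1

lemma ladderS_hittingBtwn_le (hL : L ≤ 0) (hU : 0 ≤ U) :
    (ladderS ξ (hittingBtwn (ladderS ξ) (Set.Ioo L U)ᶜ 0 k ω) ω : ℝ) ≤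
      L + (U + 1 - L) * (ladderB ξ L U 0 k ∪ ladderStay ξ L U k).indicator 1 ω := by
  by_cases hBC : ω ∈ ladderB ξ L U 0 k ∪ ladderStay ξ L U k
  · simp only [Set.indicator_of_mem hBC, Pi.one_apply, mul_one, add_sub_cancel]
    exact_mod_cast (ladderS_hittingBtwn_mem_Icc (ξ := ξ) (k := k) (ω := ω) hL hU).2
  · simp only [Set.indicator_of_notMem hBC, mul_zero, add_zero]
    rw [Set.mem_union, not_or, mem_ladderB_iff] at hBC
    have := ladderS_hittingBtwn_notMem_Ioo hBC.2
    rw [Set.mem_Ioo] at this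
    exact_mod_cast (by omega : _ ≤ L)

/-- The indicator of `ξ n = 1`, forced to vanish at `n = 0` because `X₁` is defined as if
`ξ₀ = -1`. -/
def ladderUp (ξ : ℕ → Ω → ℤ) (n : ℕ) (ω : Ω) : ℝ :=
  if n ≠ 0 ∧ ξ n ω = 1 then 1 else 0

def ladderM (ξ : ℕ → Ω → ℤ) (p : ℝ) (n : ℕ) (ω : Ω) : ℝ :=
  ladderS ξ n ω + p * ladderUp ξ n ω

lemma ladderUp_mem_Icc : ladderUp ξ n ω ∈ Set.Icc 0 1 := by
  unfold ladderUp; split_ifs <;> simp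

lemma ladderUp_succ : ladderUp ξ (n + 1) = {ω | ξ (n + 1) ω = 1}.indicator 1 := by
  ext ω
  simp [ladderUp, Set.indicator_apply]

lemma ladderX_succ_eq (hval : ∀ n ω, ξ n ω = 1 ∨ ξ n ω = -1) :
    (ladderX ξ (n + 1) ω : ℝ) = if ξ (n + 1) ω = 1 then 1 + ladderUp ξ n ω else -1 := by
  rcases hval (n + 1) ω with h | h
  · rcases n with _ | n
    · simp [ladderX, ladderUp, h]
    · rcases hval (n + 1) ω with h' | h' <;> norm_num [ladderX, ladderUp, h, h']
  · rcases n with _ | n <;> simp [ladderX, h]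

lemma ladderM_succ_sub (hval : ∀ n ω, ξ n ω = 1 ∨ ξ n ω = -1) {p : ℝ} (hp : p ^ 2 + 2 * p = 1) :
    ladderM ξ p (n + 1) ω - ladderM ξ p n ω =
      (ladderUp ξ (n + 1) ω - p) * (2 + p + ladderUp ξ n ω) := by
  simp only [ladderM, ladderS_succ, Int.cast_add, ladderX_succ_eq hval, ladderUp_succ,
    Set.indicator_apply, Set.mem_ofPred_eq, Pi.one_apply]
  split_ifs <;> linear_combination hp

variable {m : MeasurableSpace Ω}

lemma measurable_ladderX (h : ∀ j ≤ k, Measurable[m] (ξ j)) : Measurable[m] (ladderX ξ k) := by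
  have hset : ∀ j ≤ k, ∀ v : ℤ, MeasurableSet[m] {ω | ξ j ω = v} :=
    fun j hj v => h j hj (measurableSet_singleton v)
  unfold ladderX
  split_ifs with hk
  · subst hk
    exact Measurable.ite (hset 1 le_rfl 1) measurable_const measurable_const
  · exact Measurable.ite (hset k le_rfl (-1)) measurable_const
      (Measurable.ite (hset (k - 1) (Nat.sub_le k 1) 1) measurable_const measurable_const)

lemma measurable_ladderS (h : ∀ j ≤ n, Measurable[m] (ξ j)) : Measurable[m] (ladderS ξ n) :=
  Finset.measurable_sum _ fun _ hk =>
    measurable_ladderX fun j hj => h j (hj.trans (Finset.mem_Icc.1 hk).2)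

lemma measurable_ladderUp (h : Measurable[m] (ξ n)) : Measurable[m] (ladderUp ξ n) :=
  Measurable.ite ((MeasurableSet.const _).inter (h (measurableSet_singleton 1))) measurable_const
    measurable_const

lemma measurableSet_ladderStay (h : ∀ j ≤ n, Measurable[m] (ξ j)) :
    MeasurableSet[m] (ladderStay ξ L U n) := by
  simp only [ladderStay, Set.ofPred_forall]
  exact .iInter fun j => .iInter fun hj =>
    measurable_ladderS (fun i hi => h i (hi.trans hj)) measurableSet_Ioo

lemma measurable_iSup_comap_Ioi {i : ℕ} (hi : n < i) :
    Measurable[⨆ j ∈ Set.Ioi n, MeasurableSpace.comap (ξ j) inferInstance] (ξ i) :=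
  (comap_measurable (ξ i)).mono
    (le_iSup₂ (f := fun j (_ : j ∈ Set.Ioi n) => MeasurableSpace.comap (ξ j) inferInstance) i hi)
    le_rfl

end Walk

section Martingale

variable {ξ : ℕ → Ω → ℤ} {P : Measure Ω} {p : ℝ}

def ladderFiltration (hmeas : ∀ n, Measurable (ξ n)) : Filtration ℕ ‹MeasurableSpace Ω› :=
  Filtration.natural ξ fun n => (hmeas n).stronglyMeasurable

lemma measurable_ladderFiltration (hmeas : ∀ n, Measurable (ξ n)) {j n : ℕ} (hj : j ≤ n) :
    Measurable[ladderFiltration hmeas n] (ξ j) :=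
  ((Filtration.stronglyAdapted_natural (β := fun _ => ℤ) _ j).mono
    (Filtration.mono _ hj)).measurable

lemma indep_ladderFiltration (hmeas : ∀ n, Measurable (ξ n)) (hindep : iIndepFun ξ P) (n : ℕ) :
    Indep (ladderFiltration hmeas n)
      (⨆ i ∈ Set.Ioi n, MeasurableSpace.comap (ξ i) inferInstance) P :=
  indep_iSup_of_disjoint (fun i => (hmeas i).comap_le) ((iIndepFun_iff_iIndep _ _ _).1 hindep)
    (Set.Iic_disjoint_Ioi le_rfl)

lemma adapted_ladderS (hmeas : ∀ n, Measurable (ξ n)) :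
    Adapted (ladderFiltration hmeas) (ladderS ξ) :=
  fun _ => measurable_ladderS fun _ hj => measurable_ladderFiltration hmeas hj

lemma adapted_ladderM (hmeas : ∀ n, Measurable (ξ n)) :
    Adapted (ladderFiltration hmeas) (ladderM ξ p) := by
  intro n
  have hS : Measurable[ladderFiltration hmeas n] fun ω => (ladderS ξ n ω : ℝ) :=
    Measurable.of_discrete.comp (adapted_ladderS hmeas n)
  exact hS.add ((measurable_ladderUp (measurable_ladderFiltration hmeas le_rfl)).const_mul p)

variable [IsProbabilityMeasure P]

lemma integrable_ladderM (hmeas : ∀ n, Measurable (ξ n)) (n : ℕ) :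
    Integrable (ladderM ξ p n) P := by
  refine .of_bound ((adapted_ladderM (p := p) hmeas n).mono ((ladderFiltration hmeas).le n) le_rfl
    |>.aestronglyMeasurable) (2 * n + |p|) (ae_of_all _ fun ω => ?_)
  have hS : |(ladderS ξ n ω : ℝ)| ≤ 2 * n := by
    rw [← Int.cast_abs]
    exact_mod_cast abs_ladderS_le (ξ := ξ) (n := n) (ω := ω)
  have hup := ladderUp_mem_Icc (ξ := ξ) (n := n) (ω := ω)
  calc ‖ladderM ξ p n ω‖ ≤ |(ladderS ξ n ω : ℝ)| + |p| * |ladderUp ξ n ω| := by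
        rw [Real.norm_eq_abs, ladderM, ← abs_mul]
        exact abs_add_le _ _
    _ ≤ 2 * n + |p| := by
        gcongr
        exact mul_le_of_le_one_right (abs_nonneg p) (abs_le.2 ⟨by linarith [hup.1], hup.2⟩)

lemma integral_mul_ladderUp_sub_eq_zero (hmeas : ∀ n, Measurable (ξ n)) (hindep : iIndepFun ξ P)
    (hp : 0 ≤ p) (hprob : ∀ n, 1 ≤ n → P {ω | ξ n ω = 1} = ENNReal.ofReal p) {n : ℕ}
    {Z : Ω → ℝ} (hZ : Measurable[ladderFiltration hmeas n] Z) :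
    ∫ ω, Z ω * (ladderUp ξ (n + 1) ω - p) ∂P = 0 := by
  have hη : Measurable[⨆ i ∈ Set.Ioi n, MeasurableSpace.comap (ξ i) inferInstance]
      fun ω => ladderUp ξ (n + 1) ω - p :=
    (measurable_ladderUp (measurable_iSup_comap_Ioi n.lt_succ_self)).sub_const p
  have hZη : IndepFun Z (fun ω => ladderUp ξ (n + 1) ω - p) P := (IndepFun_iff_Indep _ _ _).2 <|
    indep_of_indep_of_le_right (indep_of_indep_of_le_left
      (indep_ladderFiltration hmeas hindep n) hZ.comap_le) hη.comap_le
  have hup : MeasurableSet {ω | ξ (n + 1) ω = 1} := hmeas (n + 1) (measurableSet_singleton 1)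
  have hmean : ∫ ω, (ladderUp ξ (n + 1) ω - p) ∂P = 0 := by
    rw [integral_sub (ladderUp_succ ▸ (integrable_const 1).indicator hup) (integrable_const p),
      ladderUp_succ, integral_indicator_one hup, integral_const, measureReal_def,
      hprob (n + 1) n.succ_pos]
    simp [hp]
  calc ∫ ω, Z ω * (ladderUp ξ (n + 1) ω - p) ∂P
      = (∫ ω, Z ω ∂P) * ∫ ω, (ladderUp ξ (n + 1) ω - p) ∂P :=
        hZη.integral_mul_eq_mul_integral
          (hZ.mono ((ladderFiltration hmeas).le n) le_rfl).aestronglyMeasurable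
          (hη.mono (iSup₂_le fun i _ => (hmeas i).comap_le) le_rfl).aestronglyMeasurable
    _ = 0 := by rw [hmean, mul_zero]

lemma martingale_ladderM (hmeas : ∀ n, Measurable (ξ n)) (hindep : iIndepFun ξ P)
    (hval : ∀ n ω, ξ n ω = 1 ∨ ξ n ω = -1) (hp : p ^ 2 + 2 * p = 1) (hp0 : 0 ≤ p)
    (hprob : ∀ n, 1 ≤ n → P {ω | ξ n ω = 1} = ENNReal.ofReal p) :
    Martingale (ladderM ξ p) (ladderFiltration hmeas) P := by
  refine martingale_of_setIntegral_eq_succ (adapted_ladderM hmeas).stronglyAdapted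
    (integrable_ladderM hmeas) fun n s hs => ?_
  have hZ : Measurable[ladderFiltration hmeas n] (s.indicator fun ω => 2 + p + ladderUp ξ n ω) :=
    ((measurable_ladderUp (measurable_ladderFiltration hmeas le_rfl)).const_add _).indicator hs
  rw [eq_comm, ← sub_eq_zero, ← integral_sub (integrable_ladderM hmeas _).integrableOn
    (integrable_ladderM hmeas _).integrableOn,
    ← integral_indicator ((ladderFiltration hmeas).le n s hs)]
  refine (integral_congr_ae (ae_of_all _ fun ω => ?_)).trans
    (integral_mul_ladderUp_sub_eq_zero hmeas hindep hp0 hprob hZ)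
  by_cases hω : ω ∈ s
  · simp only [Set.indicator_of_mem hω, ladderM_succ_sub hval hp]
    ring
  · simp only [Set.indicator_of_notMem hω, zero_mul]

lemma isStoppingTime_hittingBtwn_ladderS (hmeas : ∀ n, Measurable (ξ n)) (s : Set ℤ) (k : ℕ) :
    IsStoppingTime (ladderFiltration hmeas)
      fun ω => ((hittingBtwn (ladderS ξ) s 0 k ω : ℕ) : ℕ∞) :=
  (adapted_ladderS hmeas).isStoppingTime_hittingBtwn .of_discrete

lemma measurable_ladderS_hittingBtwn (hmeas : ∀ n, Measurable (ξ n)) (s : Set ℤ) (k : ℕ) :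
    Measurable fun ω => ladderS ξ (hittingBtwn (ladderS ξ) s 0 k ω) ω :=
  have hτ := isStoppingTime_hittingBtwn_ladderS hmeas s k
  (measurable_stoppedValue
    (adapted_ladderS hmeas).stronglyAdapted.isStronglyProgressive_of_discrete hτ).mono
    hτ.measurableSpace_le le_rfl

lemma integrable_ladderM_hittingBtwn (hmeas : ∀ n, Measurable (ξ n)) (s : Set ℤ) (k : ℕ) :
    Integrable (fun ω => ladderM ξ p (hittingBtwn (ladderS ξ) s 0 k ω) ω) P :=
  integrable_stoppedValue ℕ (isStoppingTime_hittingBtwn_ladderS hmeas s k)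
    (integrable_ladderM hmeas) fun ω => WithTop.coe_le_coe.2 (hittingBtwn_le ω)

lemma integral_ladderM_hittingBtwn {hmeas : ∀ n, Measurable (ξ n)}
    (hM : Martingale (ladderM ξ p) (ladderFiltration hmeas) P) (s : Set ℤ) (k : ℕ) :
    ∫ ω, ladderM ξ p (hittingBtwn (ladderS ξ) s 0 k ω) ω ∂P = 0 := by
  have hτ := isStoppingTime_hittingBtwn_ladderS hmeas s k
  have h0τ : (fun _ => ((0 : ℕ) : ℕ∞)) ≤ fun ω => ((hittingBtwn (ladderS ξ) s 0 k ω : ℕ) : ℕ∞) :=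
    fun _ => WithTop.coe_le_coe.2 (Nat.zero_le _)
  have hbdd : ∀ ω, ((hittingBtwn (ladderS ξ) s 0 k ω : ℕ) : ℕ∞) ≤ k :=
    fun ω => WithTop.coe_le_coe.2 (hittingBtwn_le ω)
  have hM0 : ∫ ω, ladderM ξ p 0 ω ∂P = 0 := by simp [ladderM, ladderUp]
  have hle := hM.submartingale.expected_stoppedValue_mono (isStoppingTime_const _ 0) hτ h0τ hbdd
  have hge := hM.neg.submartingale.expected_stoppedValue_mono (isStoppingTime_const _ 0) hτ h0τ
    hbdd
  simp only [stoppedValue, WithTop.untopA, WithTop.untopD_coe, Pi.neg_apply, integral_neg,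
    neg_le_neg_iff, hM0] at hle hge
  exact le_antisymm hge hle

end Martingale

section Exit

variable {ξ : ℕ → Ω → ℤ} {P : Measure Ω} [IsProbabilityMeasure P] {p : ℝ} {L U : ℤ}

lemma integrable_add_mul_indicator_one {s : Set Ω} (hs : MeasurableSet s) (a c : ℝ) :
    Integrable (fun ω => a + c * s.indicator 1 ω) P :=
  (integrable_const a).add (((integrable_const 1).indicator hs).const_mul c)

lemma integral_add_mul_indicator_one {s : Set Ω} (hs : MeasurableSet s) (a c : ℝ) :
    ∫ ω, a + c * s.indicator 1 ω ∂P = a + c * P.real s := by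
  have hi : Integrable (s.indicator (1 : Ω → ℝ)) P := (integrable_const 1).indicator hs
  rw [integral_add (integrable_const a) (hi.const_mul c), integral_const_mul,
    integral_indicator_one hs]
  simp

lemma measurableSet_ladderB (hmeas : ∀ n, Measurable (ξ n)) (k : ℕ) :
    MeasurableSet (ladderB ξ L U 0 k) := by
  have : ladderB ξ L U 0 k =
      {ω | U ≤ ladderS ξ (hittingBtwn (ladderS ξ) (Set.Ioo L U)ᶜ 0 k ω) ω} :=
    Set.ext fun _ => mem_ladderB_iff
  rw [this]
  exact measurableSet_le measurable_const (measurable_ladderS_hittingBtwn hmeas _ k)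

lemma ladderB_measureReal_bounds {hmeas : ∀ n, Measurable (ξ n)}
    (hM : Martingale (ladderM ξ p) (ladderFiltration hmeas) P) (hp0 : 0 ≤ p) (hp1 : p ≤ 1)
    (hL : L ≤ 0) (hU : 0 ≤ U) (k : ℕ) :
    ((U : ℝ) - L) * P.real (ladderB ξ L U 0 k) ≤ -L ∧
      -1 - (L : ℝ) ≤
        ((U : ℝ) + 1 - L) * (P.real (ladderB ξ L U 0 k) + P.real (ladderStay ξ L U k)) := by
  have hB := measurableSet_ladderB (L := L) (U := U) hmeas k
  have hC := measurableSet_ladderStay (ξ := ξ) (L := L) (U := U) (n := k) fun j _ => hmeas j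
  have hMτ := integrable_ladderM_hittingBtwn (P := P) (p := p) hmeas (Set.Ioo L U)ᶜ k
  have h0 := integral_ladderM_hittingBtwn hM (Set.Ioo L U)ᶜ k
  have hup : ∀ n ω, 0 ≤ p * ladderUp ξ n ω ∧ p * ladderUp ξ n ω ≤ 1 := fun n ω =>
    have h := ladderUp_mem_Icc (ξ := ξ) (n := n) (ω := ω)
    ⟨mul_nonneg hp0 h.1, by nlinarith [h.1, h.2]⟩
  have hUL : (0 : ℝ) ≤ U + 1 - L := by
    have : (L : ℝ) ≤ 0 := by exact_mod_cast hL
    have : (0 : ℝ) ≤ U := by exact_mod_cast hU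
    linarith
  constructor
  · have := integral_mono (integrable_add_mul_indicator_one hB _ _) hMτ fun ω =>
      (ladderS_hittingBtwn_ge hL hU).trans (le_add_of_nonneg_right (hup _ ω).1)
    rw [integral_add_mul_indicator_one hB, h0] at this
    linarith
  · have := integral_mono hMτ (integrable_add_mul_indicator_one (hB.union hC) (L + 1) (U + 1 - L))
      fun ω => by
        have := ladderS_hittingBtwn_le (ξ := ξ) (k := k) (ω := ω) hL hU
        simp only [ladderM]
        linarith [(hup (hittingBtwn (ladderS ξ) (Set.Ioo L U)ᶜ 0 k ω) ω).2]
    rw [integral_add_mul_indicator_one (hB.union hC), h0] at this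
    nlinarith [mul_le_mul_of_nonneg_left (measureReal_union_le (μ := P) (ladderB ξ L U 0 k)
      (ladderStay ξ L U k)) hUL]

lemma measureReal_ladderStay_add_le (hmeas : ∀ n, Measurable (ξ n)) (hindep : iIndepFun ξ P)
    (hprob : ∀ n, 1 ≤ n → P {ω | ξ n ω = 1} = ENNReal.ofReal p) (hp0 : 0 ≤ p) (hLU : L ≤ U)
    (n : ℕ) :
    P.real (ladderStay ξ L U (n + (U - L).toNat)) ≤
      (1 - p ^ (U - L).toNat) * P.real (ladderStay ξ L U n) := by
  set m := (U - L).toNat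
  set run := ⋂ i ∈ Finset.Ioc n (n + m), {ω | ξ i ω = 1}
  have hstay : MeasurableSet[ladderFiltration hmeas n] (ladderStay ξ L U n) :=
    measurableSet_ladderStay fun _ hj => measurable_ladderFiltration hmeas hj
  have hrun : MeasurableSet[⨆ j ∈ Set.Ioi n, MeasurableSpace.comap (ξ j) inferInstance] run :=
    .biInter (Set.to_countable _) fun i hi =>
      measurable_iSup_comap_Ioi (Finset.mem_Ioc.1 hi).1 (measurableSet_singleton 1)
  have hrunP : P.real run = p ^ m := by
    have hprod : P run = ∏ i ∈ Finset.Ioc n (n + m), P {ω | ξ i ω = 1} :=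
      hindep.meas_biInter fun i _ => ⟨{1}, measurableSet_singleton 1, rfl⟩
    rw [measureReal_def, hprod, Finset.prod_congr rfl fun i hi =>
      hprob i (Nat.one_le_of_lt (Finset.mem_Ioc.1 hi).1), Finset.prod_const, Nat.card_Ioc,
      Nat.add_sub_cancel_left, ENNReal.toReal_pow, ENNReal.toReal_ofReal hp0]
  have hinter : P.real (ladderStay ξ L U n ∩ run) = P.real (ladderStay ξ L U n) * p ^ m := by
    rw [measureReal_def,
      (Indep_iff _ _ _).1 (indep_ladderFiltration hmeas hindep n) _ _ hstay hrun,
      ENNReal.toReal_mul, ← measureReal_def, ← measureReal_def, hrunP]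
  have hsplit := measureReal_inter_add_sdiff (μ := P) (s := ladderStay ξ L U n)
    ((iSup₂_le fun i _ => (hmeas i).comap_le) _ hrun)
  calc P.real (ladderStay ξ L U (n + m))
      ≤ P.real (ladderStay ξ L U n \ run) := measureReal_mono (ladderStay_add_subset hLU)
    _ = (1 - p ^ m) * P.real (ladderStay ξ L U n) := by linarith

lemma tendsto_measureReal_ladderStay (hmeas : ∀ n, Measurable (ξ n)) (hindep : iIndepFun ξ P)
    (hprob : ∀ n, 1 ≤ n → P {ω | ξ n ω = 1} = ENNReal.ofReal p) (hp0 : 0 < p) (hp1 : p ≤ 1)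
    (hLU : L < U) :
    Tendsto (fun k => P.real (ladderStay ξ L U k)) atTop (𝓝 0) := by
  set m := (U - L).toNat
  have hm : m ≠ 0 := by omega
  have hr0 : 0 ≤ 1 - p ^ m := sub_nonneg.2 (pow_le_one₀ hp0.le hp1)
  have hr1 : 1 - p ^ m < 1 := sub_lt_self 1 (pow_pos hp0 m)
  have hgeo : ∀ j, P.real (ladderStay ξ L U (j * m)) ≤ (1 - p ^ m) ^ j := by
    intro j
    induction j with
    | zero => simp
    | succ j ih =>
      calc P.real (ladderStay ξ L U ((j + 1) * m))
          ≤ (1 - p ^ m) * P.real (ladderStay ξ L U (j * m)) := by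
            rw [add_one_mul]
            exact measureReal_ladderStay_add_le hmeas hindep hprob hp0.le hLU.le _
        _ ≤ (1 - p ^ m) ^ (j + 1) := by
            rw [pow_succ']
            exact mul_le_mul_of_nonneg_left ih hr0
  refine squeeze_zero (fun _ => measureReal_nonneg)
    (fun k => (measureReal_mono (ladderStay_anti (Nat.div_mul_le_self k m))).trans (hgeo (k / m)))
    ((tendsto_pow_atTop_nhds_zero_of_lt_one hr0 hr1).comp (Nat.tendsto_div_const_atTop hm))

lemma ladderB_limit_bounds (hmeas : ∀ n, Measurable (ξ n)) (hindep : iIndepFun ξ P)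
    (hval : ∀ n ω, ξ n ω = 1 ∨ ξ n ω = -1)
    (hprob : ∀ n, 1 ≤ n → P {ω | ξ n ω = 1} = ENNReal.ofReal p)
    (hp : p ^ 2 + 2 * p = 1) (hp0 : 0 < p) (hL : L ≤ 0) (hU : 0 ≤ U) (hLU : L < U) {b : ℝ}
    (hb : Tendsto (fun k => (P (ladderB ξ L U 0 k)).toReal) atTop (𝓝 b)) :
    0 ≤ b ∧ ((U : ℝ) - L) * b ≤ -L ∧ -1 - (L : ℝ) ≤ ((U : ℝ) + 1 - L) * b := by
  have hp1 : p ≤ 1 := by nlinarith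
  have hbounds := ladderB_measureReal_bounds (martingale_ladderM hmeas hindep hval hp hp0.le hprob)
    hp0.le hp1 hL hU
  have hstay := tendsto_measureReal_ladderStay hmeas hindep hprob hp0 hp1 hLU
  refine ⟨ge_of_tendsto' hb fun _ => ENNReal.toReal_nonneg,
    le_of_tendsto' (hb.const_mul _) fun k => (hbounds k).1, ?_⟩
  simpa using ge_of_tendsto' ((hb.add hstay).const_mul ((U : ℝ) + 1 - L)) fun k => (hbounds k).2

end Exit

lemma tendsto_atBot_one_of_bounds {x : ℝ} (hx : 0 ≤ x) {f : ℤ → ℝ}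
    (h : ∀ᶠ L : ℤ in atBot, (x - L) * f L ≤ -L ∧ -1 - L ≤ (x + 1 - L) * f L) :
    Tendsto f atBot (𝓝 1) := by
  have hneg : Tendsto (fun L : ℤ => -(L : ℝ)) atBot atTop :=
    tendsto_neg_atBot_atTop.comp (tendsto_intCast_atBot_iff.2 tendsto_id)
  have hden : Tendsto (fun L : ℤ => x + 1 - L) atBot atTop :=
    (tendsto_atTop_add_const_left _ (x + 1) hneg).congr fun L => (sub_eq_add_neg _ _).symm
  have hlow : Tendsto (fun L : ℤ => 1 - (x + 2) / (x + 1 - L)) atBot (𝓝 1) := by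
    simpa using tendsto_const_nhds.sub (tendsto_const_nhds.div_atTop hden)
  refine tendsto_of_tendsto_of_tendsto_of_le_of_le' hlow tendsto_const_nhds ?_ ?_
  all_goals filter_upwards [h, eventually_le_atBot (-1)] with L hL hL1
  all_goals have hL1' : (L : ℝ) ≤ -1 := by exact_mod_cast hL1
  · rw [sub_le_comm, le_div_iff₀ (by linarith)]
    linarith [hL.2]
  · exact le_of_mul_le_mul_left (by linarith [hL.1]) (by linarith : (0 : ℝ) < x - L)

lemma tendsto_atTop_zero_of_bounds {x : ℝ} {f : ℤ → ℝ}
    (h : ∀ᶠ U : ℤ in atTop, 0 ≤ f U ∧ (U + x) * f U ≤ x) :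
    Tendsto f atTop (𝓝 0) := by
  have hden : Tendsto (fun U : ℤ => (U : ℝ) + x) atTop atTop :=
    tendsto_atTop_add_const_right _ _ tendsto_intCast_atTop_atTop
  refine squeeze_zero' (h.mono fun _ hU => hU.1) ?_ ((tendsto_const_nhds (x := x)).div_atTop hden)
  filter_upwards [h, hden.eventually_gt_atTop 0] with U hU hpos
  rw [le_div_iff₀ hpos, mul_comm]
  exact hU.2

/-- Let `p = √2 - 1`, and for barriers `L ≤ 0 ≤ U` with
`U - L ≥ 4` let `b L U` denote the upper-exit probability `β(0)` from `0`
(the limit of `β_k(0)`).  Then for a fixed upper barrier `U = x > 0`,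
`β(0) → 1` as `L → -∞`, and for a fixed lower barrier `L = -x`,
`β(0) → 0` as `U → +∞`. -/
theorem ladder_beta_barrier_limits (p : ℝ) (hp : p = Real.sqrt 2 - 1)
    (P : Measure Ω) [IsProbabilityMeasure P]
    (ξ : ℕ → Ω → ℤ) (hmeas : ∀ n, Measurable (ξ n))
    (hindep : iIndepFun ξ P)
    (hval : ∀ n ω, ξ n ω = 1 ∨ ξ n ω = -1)
    (hprob : ∀ n, 1 ≤ n → P {ω | ξ n ω = 1} = ENNReal.ofReal p)
    (b : ℤ → ℤ → ℝ)
    (hb : ∀ L U : ℤ, L ≤ 0 → 0 ≤ U → U - L ≥ 4 →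
      Tendsto (fun k => (P (ladderB ξ L U 0 k)).toReal) atTop (nhds (b L U)))
    (x : ℤ) (hx : 0 < x) :
    Tendsto (fun L => b L x) atBot (nhds 1) ∧
    Tendsto (fun U => b (-x) U) atTop (nhds 0) := by
  have hsqrt : Real.sqrt 2 ^ 2 = 2 := Real.sq_sqrt zero_le_two
  have hp2 : p ^ 2 + 2 * p = 1 := by rw [hp]; linear_combination hsqrt
  have hp0 : 0 < p := by
    rw [hp, sub_pos, Real.lt_sqrt zero_le_one]
    norm_num
  have hbounds := fun L U hL hU h4 => ladderB_limit_bounds hmeas hindep hval hprob hp2 hp0 hL hU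
    (by omega) (hb L U hL hU h4)
  constructor
  · refine tendsto_atBot_one_of_bounds (x := x) (by positivity) ?_
    filter_upwards [eventually_le_atBot (-4)] with L hL
    exact (hbounds L x (by omega) hx.le (by omega)).2
  · refine tendsto_atTop_zero_of_bounds (x := x) ?_
    filter_upwards [eventually_ge_atTop 4] with U hU
    obtain ⟨hb0, hbU, -⟩ := hbounds (-x) U (by omega) (by omega) (by omega)
    push_cast at hbU
    exact ⟨hb0, by linarith⟩
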